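/- The (1,1)-tensor field T = Σ_{ν=1}^4 Q_ν (∂/∂P_ν ⊗ dP_ν + ∂/∂Q_ν ⊗ dQ_ν) on R^8 satisfies L_{X} T = 0 for X = −∂/∂P_1, and its Nijenhuis torsion vanishes; hence T is a recursion operator of the vector field X = −∂/∂P_1. -/
import Mathlib


/-- Partial derivative on `ℝ^8` (coordinates `(Q_1,...,Q_4,P_1,...,P_4)`). -/
noncomputable def pd (f : (Fin 8 → ℝ) → ℝ) (k : Fin 8) (x : Fin 8 → ℝ) : ℝ :=
  fderiv ℝ f x (Pi.single k 1)

/-- Components of `T = Σ_{ν=1}^4 Q_ν (∂/∂P_ν ⊗ dP_ν + ∂/∂Q_ν ⊗ dQ_ν)` on `ℝ^8`,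
with `Q_ν = x_ν` (ν = 0..3) and `P_ν = x_{4+ν}`. -/
noncomputable def Tcomp (i j : Fin 8) (x : Fin 8 → ℝ) : ℝ :=
  if i = j then
    (if h : (i : ℕ) < 4 then x i else x ⟨(i : ℕ) - 4, by have := i.isLt; omega⟩)
  else 0

/-- Components of `X = −∂/∂P_1`: `X^k = −δ^k_{P_1}` (`P_1` is coordinate `4`). -/
def Xcomp (k : Fin 8) : ℝ := if k = 4 then -1 else 0


def sig (i : Fin 8) : Fin 8 :=
  if h : (i : ℕ) < 4 then i else ⟨(i : ℕ) - 4, by have := i.isLt; omega⟩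

lemma sig_lt (i : Fin 8) : ((sig i : Fin 8) : ℕ) < 4 := by
  unfold sig; split <;> simp_all <;> omega

lemma sig_sig (i : Fin 8) : sig (sig i) = sig i := dif_pos (sig_lt i)

lemma Tcomp_eq (i j : Fin 8) (x : Fin 8 → ℝ) :
    Tcomp i j x = if i = j then x (sig i) else 0 := by
  unfold Tcomp sig
  split
  · split <;> rfl
  · rfl

lemma pd_coord (m k : Fin 8) (x : Fin 8 → ℝ) :
    pd (fun y => y m) k x = if m = k then 1 else 0 := by
  unfold pd
  have : fderiv ℝ (fun y : Fin 8 → ℝ => y m) x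
      = (ContinuousLinearMap.proj m : (Fin 8 → ℝ) →L[ℝ] ℝ) :=
    (ContinuousLinearMap.proj m : (Fin 8 → ℝ) →L[ℝ] ℝ).fderiv
  rw [this]
  simp [Pi.single_apply]

lemma pd_const (c : ℝ) (k : Fin 8) (x : Fin 8 → ℝ) : pd (fun _ => c) k x = 0 := by
  unfold pd; simp

lemma sum_single (a : Fin 8) (F : Fin 8 → ℝ) (h0 : ∀ k, k ≠ a → F k = 0) :
    ∑ k, F k = F a :=
  Finset.sum_eq_single_of_mem a (Finset.mem_univ a) (fun k _ hk => h0 k hk)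

lemma pd_Tcomp (i j k : Fin 8) (x : Fin 8 → ℝ) :
    pd (Tcomp i j) k x = if i = j ∧ sig i = k then 1 else 0 := by
  by_cases hij : i = j
  · have hfun : Tcomp i j = fun y => y (sig i) := by
      funext y; rw [Tcomp_eq]; simp [hij]
    rw [hfun, pd_coord]
    simp [hij]
  · have hfun : Tcomp i j = fun _ => (0:ℝ) := by
      funext y; rw [Tcomp_eq]; simp [hij]
    rw [hfun, pd_const]
    simp [hij]

/-- `T` satisfies `L_X T = 0` for `X = −∂/∂P_1` and its Nijenhuis torsion vanishes;
hence `T` is a recursion operator of `X = −∂/∂P_1`. -/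
theorem T_is_recursion_operator_of_X (x : Fin 8 → ℝ) (h i j : Fin 8) :
    (∑ k, (Xcomp k * pd (Tcomp i j) k x
        - Tcomp k j x * pd (fun _ => Xcomp i) k x
        + Tcomp i k x * pd (fun _ => Xcomp k) j x) = 0) ∧
    (∑ k, (Tcomp k i x * pd (Tcomp h j) k x
        - Tcomp k j x * pd (Tcomp h i) k x
        + Tcomp h k x * pd (Tcomp k i) j x
        - Tcomp h k x * pd (Tcomp k j) i x) = 0) := by
  constructor
  · have hs : ∀ k : Fin 8, Xcomp k * pd (Tcomp i j) k x
        - Tcomp k j x * pd (fun _ => Xcomp i) k x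
        + Tcomp i k x * pd (fun _ => Xcomp k) j x = 0 := by
      intro k
      rw [pd_const, pd_const, pd_Tcomp]
      have hk : ¬ (i = j ∧ sig i = k) ∨ Xcomp k = 0 := by
        by_cases hc : i = j ∧ sig i = k
        · right
          have := sig_lt i
          unfold Xcomp
          rw [← hc.2]
          have : sig i ≠ 4 := by
            intro hh
            rw [hh] at this
            exact absurd this (by decide)
          simp [this]
        · left; exact hc
      rcases hk with hk | hk
      · simp only [if_neg hk, mul_zero, zero_mul, sub_zero, add_zero, zero_add, zero_sub, neg_zero]
      · simp [hk]
    rw [Finset.sum_congr rfl (fun k _ => hs k)]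
    simp
  · have key : ∀ a b : Fin 8, sig a = b → x (sig b) = x (sig a) := by
      intro a b hab
      rw [← hab, sig_sig]
    simp only [Tcomp_eq, pd_Tcomp]
    simp only [ite_mul, mul_ite, zero_mul, mul_zero, mul_one]
    rw [Finset.sum_sub_distrib, Finset.sum_add_distrib, Finset.sum_sub_distrib]
    have e1 : (∑ k : Fin 8, if h = j ∧ sig h = k then if k = i then x (sig k) else 0 else 0)
        = if h = j ∧ sig h = i then x (sig i) else 0 := by
      rw [sum_single (sig h)]
      · by_cases h1 : h = j
        · subst h1
          by_cases h2 : sig h = i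
          · simp [h2]
          · simp [h2]
        · simp [h1]
      · intro k hk; simp [Ne.symm hk]
    have e2 : (∑ k : Fin 8, if h = i ∧ sig h = k then if k = j then x (sig k) else 0 else 0)
        = if h = i ∧ sig h = j then x (sig j) else 0 := by
      rw [sum_single (sig h)]
      · by_cases h1 : h = i
        · subst h1
          by_cases h2 : sig h = j
          · simp [h2]
          · simp [h2]
        · simp [h1]
      · intro k hk; simp [Ne.symm hk]
    have e3 : (∑ k : Fin 8, if k = i ∧ sig k = j then if h = k then x (sig h) else 0 else 0)
        = if h = i ∧ sig h = j then x (sig h) else 0 := by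
      rw [sum_single h]
      · by_cases h1 : h = i ∧ sig h = j <;> simp [h1]
      · intro k hk; simp [Ne.symm hk]
    have e4 : (∑ k : Fin 8, if k = j ∧ sig k = i then if h = k then x (sig h) else 0 else 0)
        = if h = j ∧ sig h = i then x (sig h) else 0 := by
      rw [sum_single h]
      · by_cases h1 : h = j ∧ sig h = i <;> simp [h1]
      · intro k hk; simp [Ne.symm hk]
    rw [e1, e2, e3, e4]
    by_cases h1 : h = j ∧ sig h = i <;> by_cases h2 : h = i ∧ sig h = j
    · rw [key h i h1.2, key h j h2.2]; simp [h1, h2]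
    · rw [key h i h1.2]; simp [h1, h2]
    · rw [key h j h2.2]; simp [h1, h2]
    · simp [h1, h2]
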